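/- Under the hypotheses of the previous statement (a, b, c, d, f, g : ℝ → ℝ with a nonvanishing; λ(t) = exp(−∫₀ᵗ(c − 2d) ds); μ₀ a twice-differentiable solution of the characteristic equation μ'' − τμ' + 4σμ = 0 with μ₀(0) = 0, μ₀'(0) = 2a(0) ≠ 0 and μ₀ ≠ 0 on (0,T); α₀ = μ₀'/(4aμ₀) − d/(2a)), the function δ₀(t) = (λ(t)/μ₀(t)) ∫₀ᵗ [ (f(s) − (d(s)/a(s))g(s)) μ₀(s) + (g(s)/(2a(s))) μ₀'(s) ] ds/λ(s) satisfies on (0, T) the equation δ₀' + (c + 4aα₀)δ₀ = f + 2α₀ g. -/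

import Mathlib

/-!
Since `λ' = -(c - 2d) λ` and `4aα₀ = μ₀'/μ₀ - 2d`, the coefficient `c + 4aα₀` is the logarithmic
derivative of `μ₀/λ`. Hence `δ₀ = (λ/μ₀) ∫₀ᵗ G/λ` is the variation-of-constants solution of
`δ' + (c + 4aα₀) δ = G/μ₀`, where `G = (f - dg/a)μ₀ + gμ₀'/(2a)`; and `G/μ₀ = f + 2α₀g` is an
algebraic identity.
-/

open Real

theorem hasDerivAt_exp_neg_integral {h : ℝ → ℝ} (hh : Continuous h) (t₀ t : ℝ) :
    HasDerivAt (fun u => exp (-∫ s in t₀..u, h s))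
      (-h t * exp (-∫ s in t₀..t, h s)) t := by
  simpa [mul_comm] using ((hh.integral_hasStrictDerivAt t₀ t).hasDerivAt.neg).exp

theorem hasDerivAt_of_eq_div_mul_integral {lam μ F δ : ℝ → ℝ} {p μ' t₀ t : ℝ}
    (hlam : HasDerivAt lam (-p * lam t) t) (hμ : HasDerivAt μ μ' t) (hμt : μ t ≠ 0)
    (hF : Continuous F) (hδ : ∀ u, δ u = lam u / μ u * ∫ s in t₀..u, F s) :
    HasDerivAt δ (-(p + μ' / μ t) * δ t + lam t / μ t * F t) t := by
  rw [funext hδ]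
  refine ((hlam.div hμ hμt).mul (hF.integral_hasStrictDerivAt t₀ t).hasDerivAt).congr_deriv ?_
  rw [Pi.div_apply]
  field_simp
  ring

theorem fundamental_solution_delta_general
    (a c d f g : ℝ → ℝ)
    (ha : Differentiable ℝ a)
    (hc : Differentiable ℝ c) (hd : Differentiable ℝ d)
    (hf : Continuous f) (hg : Continuous g)
    (hane : ∀ t, a t ≠ 0)
    (T : ℝ)
    (lam : ℝ → ℝ)
    (hlam : ∀ t, lam t = Real.exp (-∫ s in (0:ℝ)..t, (c s - 2 * d s)))
    (μ₀ : ℝ → ℝ)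
    (hμ₀ : Differentiable ℝ μ₀) (hμ₀' : Differentiable ℝ (deriv μ₀))
    (hμ₀ne : ∀ t ∈ Set.Ioo (0:ℝ) T, μ₀ t ≠ 0)
    (α₀ δ₀ : ℝ → ℝ)
    (hα₀ : ∀ t, α₀ t = deriv μ₀ t / (4 * a t * μ₀ t) - d t / (2 * a t))
    (hδ₀ : ∀ t, δ₀ t = lam t / μ₀ t *
        ∫ s in (0:ℝ)..t,
          ((f s - d s / a s * g s) * μ₀ s + g s / (2 * a s) * deriv μ₀ s) / lam s) :
    ∀ t ∈ Set.Ioo (0:ℝ) T,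
      deriv δ₀ t + (c t + 4 * a t * α₀ t) * δ₀ t = f t + 2 * α₀ t * g t := by
  intro t ht
  have hlam_eq : lam = fun u => exp (-∫ s in (0:ℝ)..u, (c s - 2 * d s)) := funext hlam
  have hlam_pos : ∀ u, 0 < lam u := fun u => hlam u ▸ exp_pos _
  have hlam_deriv : ∀ u, HasDerivAt lam (-(c u - 2 * d u) * lam u) u := by
    intro u
    rw [hlam_eq]
    exact hasDerivAt_exp_neg_integral (hc.continuous.sub (continuous_const.mul hd.continuous)) 0 u
  have hlam_cont : Continuous lam :=
    continuous_iff_continuousAt.2 fun u => (hlam_deriv u).continuousAt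
  have hF_cont : Continuous fun s =>
      ((f s - d s / a s * g s) * μ₀ s + g s / (2 * a s) * deriv μ₀ s) / lam s := by
    have h2a : ∀ s, 2 * a s ≠ 0 := fun s => mul_ne_zero two_ne_zero (hane s)
    refine Continuous.div ?_ hlam_cont fun s => (hlam_pos s).ne'
    exact ((hf.sub ((hd.continuous.div ha.continuous hane).mul hg)).mul hμ₀.continuous).add
      ((hg.div (continuous_const.mul ha.continuous) h2a).mul hμ₀'.continuous)
  rw [(hasDerivAt_of_eq_div_mul_integral (hlam_deriv t) (hμ₀ t).hasDerivAt (hμ₀ne t ht)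
    hF_cont hδ₀).deriv, hα₀, hδ₀ t]
  have hat := hane t
  have hμ₀t := hμ₀ne t ht
  have hlamt := (hlam_pos t).ne'
  field_simp
  ring

/-- The fundamental solution component
`δ₀(t) = (λ(t)/μ₀(t)) ∫₀ᵗ [(f - (d/a)g)μ₀ + (g/(2a))μ₀'] ds/λ(s)` satisfies
`δ₀' + (c + 4aα₀)δ₀ = f + 2α₀g` on `(0, T)`. -/
theorem fundamental_solution_delta
    (a b c d f g : ℝ → ℝ)
    (ha : Differentiable ℝ a) (hb : Differentiable ℝ b)
    (hc : Differentiable ℝ c) (hd : Differentiable ℝ d)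
    (hf : Continuous f) (hg : Continuous g)
    (hane : ∀ t, a t ≠ 0)
    (T : ℝ)
    (τ σ lam : ℝ → ℝ)
    (hτ : ∀ t, τ t = deriv a t / a t - 2 * c t + 4 * d t)
    (hσ : ∀ t, σ t = a t * b t - c t * d t + (d t) ^ 2 + d t * deriv a t / (2 * a t)
        - deriv d t / 2)
    (hlam : ∀ t, lam t = Real.exp (-∫ s in (0:ℝ)..t, (c s - 2 * d s)))
    (μ₀ : ℝ → ℝ)
    (hμ₀ : Differentiable ℝ μ₀) (hμ₀' : Differentiable ℝ (deriv μ₀))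
    (hode₀ : ∀ t, deriv (deriv μ₀) t - τ t * deriv μ₀ t + 4 * σ t * μ₀ t = 0)
    (h₀0 : μ₀ 0 = 0) (h₀0' : deriv μ₀ 0 = 2 * a 0)
    (hμ₀ne : ∀ t ∈ Set.Ioo (0:ℝ) T, μ₀ t ≠ 0)
    (α₀ δ₀ : ℝ → ℝ)
    (hα₀ : ∀ t, α₀ t = deriv μ₀ t / (4 * a t * μ₀ t) - d t / (2 * a t))
    (hδ₀ : ∀ t, δ₀ t = lam t / μ₀ t *
        ∫ s in (0:ℝ)..t,
          ((f s - d s / a s * g s) * μ₀ s + g s / (2 * a s) * deriv μ₀ s) / lam s) :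
    ∀ t ∈ Set.Ioo (0:ℝ) T,
      deriv δ₀ t + (c t + 4 * a t * α₀ t) * δ₀ t = f t + 2 * α₀ t * g t :=
  fundamental_solution_delta_general a c d f g ha hc hd hf hg hane T lam hlam μ₀ hμ₀ hμ₀' hμ₀ne α₀
    δ₀ hα₀ hδ₀
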